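/- For any m×n real matrix M and any rank r ≤ min(m,n), the matrix BA obtained from the rank-r SVD approximation satisfies rank(BA) ≤ r, and for every real matrix N with rank(N) ≤ r, ‖M − BA‖_F ≤ ‖M − N‖_F (Eckart–Young–Mirsky theorem in the Frobenius norm). -/

import Mathlib

open Matrix

/-- Rectangular diagonal matrix with diagonal entries `σ`. -/
noncomputable def rectDiag (m n : ℕ) (σ : Fin (min m n) → ℝ) : Matrix (Fin m) (Fin n) ℝ :=
  fun i j => if h : (i : ℕ) = (j : ℕ) ∧ (i : ℕ) < min m n then σ ⟨i, h.2⟩ else 0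

/-- `B` factor of `SVDApprox(M; r)`: `U[:, :r] Σ[:r,:r]^{1/2}`. -/
noncomputable def svdB (m n r : ℕ) (hr : r ≤ min m n) (U : Matrix (Fin m) (Fin m) ℝ)
    (σ : Fin (min m n) → ℝ) : Matrix (Fin m) (Fin r) ℝ :=
  U.submatrix id (fun j : Fin r => Fin.castLE (le_trans hr (min_le_left m n)) j) *
    Matrix.diagonal (fun i : Fin r => Real.sqrt (σ (Fin.castLE hr i)))

/-- `A` factor of `SVDApprox(M; r)`: `Σ[:r,:r]^{1/2} (V[:, :r])ᵀ`. -/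
noncomputable def svdA (m n r : ℕ) (hr : r ≤ min m n) (V : Matrix (Fin n) (Fin n) ℝ)
    (σ : Fin (min m n) → ℝ) : Matrix (Fin r) (Fin n) ℝ :=
  Matrix.diagonal (fun i : Fin r => Real.sqrt (σ (Fin.castLE hr i))) *
    (V.submatrix id (fun j : Fin r => Fin.castLE (le_trans hr (min_le_right m n)) j))ᵀ

/-- Frobenius norm of a real matrix. -/
noncomputable def frob {m n : ℕ} (M : Matrix (Fin m) (Fin n) ℝ) : ℝ :=
  Real.sqrt (∑ i, ∑ j, (M i j) ^ 2)

-- projection existence lemma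
lemma exists_proj (m n : ℕ) (N : Matrix (Fin m) (Fin n) ℝ) :
    ∃ P : Matrix (Fin m) (Fin m) ℝ,
      Pᵀ = P ∧ P * P = P ∧ P * N = N ∧ P.trace = (N.rank : ℝ) := by
  classical
  let e : EuclideanSpace ℝ (Fin m) ≃ₗ[ℝ] (Fin m → ℝ) := WithLp.linearEquiv 2 ℝ (Fin m → ℝ)
  let K : Submodule ℝ (EuclideanSpace ℝ (Fin m)) :=
    (LinearMap.range N.mulVecLin).map e.symm.toLinearMap
  have hfin : Module.finrank ℝ K = N.rank := by
    exact (LinearEquiv.finrank_map_eq e.symm _).trans rfl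
  let k := Module.finrank ℝ K
  let b : OrthonormalBasis (Fin k) ℝ K := stdOrthonormalBasis ℝ K
  let Q : Matrix (Fin m) (Fin k) ℝ := fun i j => e ((b j : EuclideanSpace ℝ (Fin m))) i
  have hQQ : Qᵀ * Q = 1 := by
    ext j l
    simp only [Matrix.mul_apply, Matrix.one_apply, Matrix.transpose_apply]
    have := b.orthonormal
    rw [orthonormal_iff_ite] at this
    have h2 := this j l
    rw [Submodule.coe_inner, PiLp.inner_apply] at h2
    simp only [RCLike.inner_apply, conj_trivial] at h2
    simp only [WithLp.linearEquiv_apply, Q] at *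
    exact (Finset.sum_congr rfl fun x _ => mul_comm _ _).trans h2
  have hPN : Q * (Qᵀ * N) = N := by
    ext i j
    have hcol : (fun i => N i j) ∈ LinearMap.range N.mulVecLin := by
      refine ⟨Pi.single j 1, ?_⟩
      ext i
      simp [Matrix.mulVecLin_apply, Matrix.mulVec, dotProduct, Pi.single_apply, mul_ite]
    have hmem : e.symm (fun i => N i j) ∈ K := Submodule.mem_map_of_mem hcol
    have hs := b.sum_repr' ⟨e.symm (fun i => N i j), hmem⟩
    have hs2 := congrArg (fun z : K => e (z : EuclideanSpace ℝ (Fin m)) i) hs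
    simp only [AddSubmonoidClass.coe_finset_sum, Submodule.coe_smul, map_sum, _root_.map_smul,
      LinearEquiv.apply_symm_apply, Finset.sum_apply, Pi.smul_apply, smul_eq_mul] at hs2
    rw [Matrix.mul_apply, ← hs2]
    refine Finset.sum_congr rfl fun l _ => ?_
    rw [Matrix.mul_apply, Submodule.coe_inner, PiLp.inner_apply]
    simp only [RCLike.inner_apply, conj_trivial, Matrix.transpose_apply]
    rw [mul_comm]
    congr 1
    exact Finset.sum_congr rfl fun x _ => mul_comm (G := ℝ) _ _
  refine ⟨Q * Qᵀ, by rw [Matrix.transpose_mul, Matrix.transpose_transpose], ?_, ?_, ?_⟩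
  · rw [Matrix.mul_assoc, ← Matrix.mul_assoc Qᵀ Q Qᵀ, hQQ, Matrix.one_mul]
  · rw [Matrix.mul_assoc]; exact hPN
  · rw [Matrix.trace_mul_comm, hQQ, Matrix.trace_one]
    simp [← hfin, k]

lemma sqsum_eq_trace {m n : ℕ} (X : Matrix (Fin m) (Fin n) ℝ) :
    ∑ i, ∑ j, X i j ^ 2 = (Xᵀ * X).trace := by
  simp only [Matrix.trace, Matrix.diag, Matrix.mul_apply, Matrix.transpose_apply, sq]
  exact Finset.sum_comm

lemma sum_filter_lt {p : ℕ} (r : ℕ) (hrp : r ≤ p) (f : Fin p → ℝ) :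
    ∑ i ∈ Finset.univ.filter (fun i : Fin p => (i : ℕ) < r), f i
      = ∑ j : Fin r, f (Fin.castLE hrp j) := by
  rcases Nat.eq_zero_or_pos r with hr0 | hr0
  · subst hr0; simp
  refine Finset.sum_nbij' (fun i => ⟨(i : ℕ) % r, Nat.mod_lt _ hr0⟩) (fun j => Fin.castLE hrp j)
    (by simp) (by simp) ?_ ?_ ?_
  · intro a ha
    simp only [Finset.mem_filter] at ha
    ext; simp [Nat.mod_eq_of_lt ha.2]
  · intro a _; ext; simp [Nat.mod_eq_of_lt a.2]
  · intro a ha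
    simp only [Finset.mem_filter] at ha
    congr 1; ext; simp [Nat.mod_eq_of_lt ha.2]

lemma abel_bound {p : ℕ} (r : ℕ) (lam t : Fin p → ℝ) (hmono : Antitone lam)
    (h0 : ∀ i, 0 ≤ lam i) (ht0 : ∀ i, 0 ≤ t i) (ht1 : ∀ i, t i ≤ 1)
    (hts : ∑ i, t i ≤ r) :
    ∑ i, lam i * t i ≤ ∑ i ∈ Finset.univ.filter (fun i : Fin p => (i : ℕ) < r), lam i := by
  classical
  by_cases hpr : p ≤ r
  · rw [Finset.filter_true_of_mem (fun i _ => lt_of_lt_of_le i.isLt hpr)]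
    exact Finset.sum_le_sum fun i _ => by
      nlinarith [h0 i, ht0 i, ht1 i]
  push_neg at hpr
  set S := Finset.univ.filter (fun i : Fin p => (i : ℕ) < r) with hS
  have hrp : r ≤ p := hpr.le
  have hcard : ∑ _i ∈ S, (1 : ℝ) = r := by
    rw [hS, sum_filter_lt r hrp]; simp
  set c := lam ⟨r, hpr⟩ with hc
  have hc0 : 0 ≤ c := h0 _
  have hsplit : ∑ i, lam i * t i = ∑ i ∈ S, lam i * t i + ∑ i ∈ Sᶜ, lam i * t i :=
    (Finset.sum_add_sum_compl S _).symm
  have h1 : ∑ i ∈ Sᶜ, lam i * t i ≤ c * ∑ i ∈ Sᶜ, t i := by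
    rw [Finset.mul_sum]
    refine Finset.sum_le_sum fun i hi => ?_
    have : ¬ ((i : ℕ) < r) := by
      simp only [hS, Finset.mem_compl, Finset.mem_filter, Finset.mem_univ, true_and] at hi
      exact hi
    have hle : lam i ≤ c := hmono (by simpa [Fin.le_def] using not_lt.mp this)
    nlinarith [ht0 i]
  have h2 : ∑ i ∈ Sᶜ, t i ≤ ∑ i ∈ S, (1 - t i) := by
    have : ∑ i ∈ S, t i + ∑ i ∈ Sᶜ, t i = ∑ i, t i := Finset.sum_add_sum_compl S _
    rw [Finset.sum_sub_distrib, hcard]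
    linarith
  have h3 : c * ∑ i ∈ S, (1 - t i) ≤ ∑ i ∈ S, lam i * (1 - t i) := by
    rw [Finset.mul_sum]
    refine Finset.sum_le_sum fun i hi => ?_
    have hir : (i : ℕ) < r := by
      simp only [hS, Finset.mem_filter, Finset.mem_univ, true_and] at hi; exact hi
    have hle : c ≤ lam i := hmono (by simp [Fin.le_def]; omega)
    nlinarith [ht1 i]
  have h4 : ∑ i ∈ S, (1 - t i) ≥ 0 :=
    Finset.sum_nonneg fun i _ => by linarith [ht1 i]
  calc ∑ i, lam i * t i ≤ ∑ i ∈ S, lam i * t i + c * ∑ i ∈ Sᶜ, t i := by linarith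
    _ ≤ ∑ i ∈ S, lam i * t i + c * ∑ i ∈ S, (1 - t i) := by nlinarith
    _ ≤ ∑ i ∈ S, lam i * t i + ∑ i ∈ S, lam i * (1 - t i) := by linarith
    _ = ∑ i ∈ S, lam i := by rw [← Finset.sum_add_distrib]; exact Finset.sum_congr rfl fun i _ => by ring

lemma sqsum_nonneg {m n : ℕ} (X : Matrix (Fin m) (Fin n) ℝ) :
    0 ≤ ∑ i, ∑ j, X i j ^ 2 :=
  Finset.sum_nonneg fun _ _ => Finset.sum_nonneg fun _ _ => sq_nonneg _

lemma sqsum_proj_split {m n : ℕ} (P : Matrix (Fin m) (Fin m) ℝ)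
    (hsym : Pᵀ = P) (hidem : P * P = P) (X : Matrix (Fin m) (Fin n) ℝ) :
    ∑ i, ∑ j, (((1 - P) * X : Matrix (Fin m) (Fin n) ℝ)) i j ^ 2 ≤ ∑ i, ∑ j, X i j ^ 2 := by
  have hsym' : (1 - P)ᵀ = 1 - P := by
    rw [Matrix.transpose_sub, Matrix.transpose_one, hsym]
  have hidem' : (1 - P) * (1 - P) = 1 - P := by
    rw [Matrix.sub_mul, Matrix.mul_sub, Matrix.mul_sub, hidem, Matrix.one_mul, Matrix.mul_one,
      Matrix.one_mul]
    abel
  have h1 : ∑ i, ∑ j, (P * X) i j ^ 2 = (Xᵀ * (P * X)).trace := by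
    rw [sqsum_eq_trace, Matrix.transpose_mul, hsym, Matrix.mul_assoc,
      ← Matrix.mul_assoc P P X, hidem]
  have h2 : ∑ i, ∑ j, (((1 - P) * X : Matrix (Fin m) (Fin n) ℝ)) i j ^ 2 = (Xᵀ * ((1 - P) * X)).trace := by
    rw [sqsum_eq_trace, Matrix.transpose_mul, hsym', Matrix.mul_assoc,
      ← Matrix.mul_assoc (1 - P) (1 - P) X, hidem']
  have h3 : (Xᵀ * (P * X)).trace + (Xᵀ * ((1 - P) * X)).trace = ∑ i, ∑ j, X i j ^ 2 := by
    rw [sqsum_eq_trace, ← Matrix.trace_add, ← Matrix.mul_add]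
    congr 2
    rw [Matrix.sub_mul, Matrix.one_mul]
    abel
  have h4 := sqsum_nonneg (P * X)
  linarith

lemma sqsum_orth {m n : ℕ} (U : Matrix (Fin m) (Fin m) ℝ) (V : Matrix (Fin n) (Fin n) ℝ)
    (hU : Uᵀ * U = 1) (hV : Vᵀ * V = 1) (X : Matrix (Fin m) (Fin n) ℝ) :
    ∑ i, ∑ j, (U * X * Vᵀ) i j ^ 2 = ∑ i, ∑ j, X i j ^ 2 := by
  have hVV : V * Vᵀ = 1 := mul_eq_one_comm.mp hV
  rw [sqsum_eq_trace, sqsum_eq_trace]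
  rw [Matrix.transpose_mul, Matrix.transpose_mul, Matrix.transpose_transpose]
  simp only [Matrix.mul_assoc]
  have hUX : Uᵀ * (U * (X * Vᵀ)) = X * Vᵀ := by rw [← Matrix.mul_assoc, hU, Matrix.one_mul]
  rw [hUX, Matrix.trace_mul_comm]
  simp only [Matrix.mul_assoc]
  rw [show Vᵀ * V = 1 from hV, Matrix.mul_one]

lemma row_sq_sum (m n : ℕ) (τ : Fin (min m n) → ℝ) (i : Fin m) :
    ∑ j, rectDiag m n τ i j ^ 2 = if h : (i : ℕ) < min m n then τ ⟨i, h⟩ ^ 2 else 0 := by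
  by_cases h : (i : ℕ) < min m n
  · rw [dif_pos h]
    have hin : (i : ℕ) < n := lt_of_lt_of_le h (min_le_right m n)
    rw [Finset.sum_eq_single (⟨(i : ℕ), hin⟩ : Fin n)]
    · simp [rectDiag, h]
    · intro j _ hj
      simp only [rectDiag]; rw [dif_neg, zero_pow two_ne_zero]
      rintro ⟨h1, -⟩
      exact hj (Fin.ext h1.symm)
    · intro hmem; exact absurd (Finset.mem_univ _) hmem
  · rw [dif_neg h]
    refine Finset.sum_eq_zero fun j _ => ?_
    simp only [rectDiag]; rw [dif_neg, zero_pow two_ne_zero]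
    rintro ⟨-, h2⟩; exact h h2

lemma sqsum_rectDiag (m n : ℕ) (τ : Fin (min m n) → ℝ) :
    ∑ i, ∑ j, rectDiag m n τ i j ^ 2 = ∑ j : Fin (min m n), τ j ^ 2 := by
  simp_rw [row_sq_sum]
  rw [← Finset.sum_subset (Finset.filter_subset (fun i : Fin m => (i : ℕ) < min m n) Finset.univ)]
  · rw [sum_filter_lt (min m n) (min_le_left m n)]
    refine Finset.sum_congr rfl fun j _ => ?_
    rw [dif_pos (by simpa using j.isLt)]
    congr 1
  · intro x _ hx
    rw [Finset.mem_filter] at hx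
    rw [dif_neg (fun h => hx ⟨Finset.mem_univ _, h⟩)]

lemma rectDiag_mul_transpose (m n : ℕ) (σ : Fin (min m n) → ℝ) :
    rectDiag m n σ * (rectDiag m n σ)ᵀ =
      Matrix.diagonal (fun i : Fin m => if h : (i : ℕ) < min m n then σ ⟨i, h⟩ ^ 2 else 0) := by
  ext i l
  rw [Matrix.mul_apply]
  simp only [Matrix.transpose_apply]
  by_cases hil : i = l
  · subst hil
    rw [Matrix.diagonal_apply_eq]
    simp_rw [← sq]
    exact row_sq_sum m n σ i
  · rw [Matrix.diagonal_apply_ne _ hil]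
    refine Finset.sum_eq_zero fun j _ => ?_
    by_cases h1 : (i : ℕ) = (j : ℕ) ∧ (i : ℕ) < min m n
    · have h2 : ¬ ((l : ℕ) = (j : ℕ) ∧ (l : ℕ) < min m n) := by
        rintro ⟨h2, -⟩
        exact hil (Fin.ext (h1.1.trans h2.symm))
      simp only [rectDiag]; rw [dif_neg h2, mul_zero]
    · simp only [rectDiag]; rw [dif_neg h1, zero_mul]

lemma trace_mul_diagonal {m : ℕ} (P : Matrix (Fin m) (Fin m) ℝ) (d : Fin m → ℝ) :
    (P * Matrix.diagonal d).trace = ∑ i, d i * P i i := by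
  simp [Matrix.trace, Matrix.diag, Matrix.mul_diagonal, mul_comm]


lemma sqsum_proj_mul {m n : ℕ} (P : Matrix (Fin m) (Fin m) ℝ)
    (hsym : Pᵀ = P) (hidem : P * P = P) (X : Matrix (Fin m) (Fin n) ℝ) :
    ∑ i, ∑ j, ((P * X : Matrix (Fin m) (Fin n) ℝ)) i j ^ 2 = (Xᵀ * (P * X)).trace := by
  rw [sqsum_eq_trace, Matrix.transpose_mul, hsym, Matrix.mul_assoc,
    ← Matrix.mul_assoc P P X, hidem]

def embE (p r : ℕ) : Matrix (Fin p) (Fin r) ℝ :=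
  fun i k => if (i : ℕ) = (k : ℕ) then 1 else 0

lemma mul_embE {p r : ℕ} (h : r ≤ p) (W : Matrix (Fin p) (Fin p) ℝ) :
    W * embE p r = W.submatrix id (fun k : Fin r => Fin.castLE h k) := by
  ext i k
  rw [Matrix.mul_apply]
  have hc : ∀ b : Fin p, ((b : ℕ) = (k : ℕ)) ↔ (b = Fin.castLE h k) := fun b => by
    simp [Fin.ext_iff]
  simp only [embE, hc, mul_ite, mul_one, mul_zero]
  simp

lemma embE_diag_embE (m n r : ℕ) (hr : r ≤ min m n) (σ : Fin (min m n) → ℝ) :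
    embE m r * Matrix.diagonal (fun k : Fin r => σ (Fin.castLE hr k)) * (embE n r)ᵀ
      = rectDiag m n (fun j => if (j : ℕ) < r then σ j else 0) := by
  ext i j
  rw [Matrix.mul_apply]
  by_cases hi : (i : ℕ) < r
  · rw [Finset.sum_eq_single (⟨(i : ℕ), hi⟩ : Fin r)]
    · by_cases hij : (i : ℕ) = (j : ℕ)
      · simp only [Matrix.mul_diagonal, Matrix.transpose_apply, embE, rectDiag]
        rw [dif_pos ⟨hij, lt_of_lt_of_le hi hr⟩, if_pos hi]
        simp [hij.symm]
      · simp only [Matrix.mul_diagonal, Matrix.transpose_apply, embE, rectDiag]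
        rw [dif_neg (fun hh => hij hh.1), if_neg (fun hh : (j:ℕ) = (i:ℕ) => hij hh.symm)]
        ring
    · intro k _ hk
      simp only [Matrix.mul_diagonal, Matrix.transpose_apply, embE]
      rw [if_neg (fun hh : (i:ℕ) = (k:ℕ) => hk (Fin.ext hh.symm))]
      ring
    · intro hmem; exact absurd (Finset.mem_univ _) hmem
  · rw [Finset.sum_eq_zero]
    · simp only [rectDiag]
      rw [eq_comm]
      by_cases hc : (i : ℕ) = (j : ℕ) ∧ (i : ℕ) < min m n
      · rw [dif_pos hc, if_neg hi]
      · rw [dif_neg hc]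
    · intro k _
      simp only [Matrix.mul_diagonal, Matrix.transpose_apply, embE]
      rw [if_neg (fun hh : (i:ℕ) = (k:ℕ) => hi (by rw [hh]; exact k.isLt))]
      ring

lemma BA_eq (m n r : ℕ) (hr : r ≤ min m n) (U : Matrix (Fin m) (Fin m) ℝ)
    (V : Matrix (Fin n) (Fin n) ℝ) (σ : Fin (min m n) → ℝ) (hσ0 : ∀ i, 0 ≤ σ i) :
    svdB m n r hr U σ * svdA m n r hr V σ
      = U * rectDiag m n (fun j => if (j : ℕ) < r then σ j else 0) * Vᵀ := by
  have hd : Matrix.diagonal (fun i : Fin r => Real.sqrt (σ (Fin.castLE hr i))) *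
      Matrix.diagonal (fun i : Fin r => Real.sqrt (σ (Fin.castLE hr i))) =
      Matrix.diagonal (fun k : Fin r => σ (Fin.castLE hr k)) := by
    rw [Matrix.diagonal_mul_diagonal,
      show (fun i : Fin r => Real.sqrt (σ (Fin.castLE hr i)) * Real.sqrt (σ (Fin.castLE hr i)))
        = fun k : Fin r => σ (Fin.castLE hr k) from funext fun i => Real.mul_self_sqrt (hσ0 _)]
  rw [svdB, svdA, ← mul_embE (le_trans hr (min_le_left m n)) U,
    ← mul_embE (le_trans hr (min_le_right m n)) V, ← embE_diag_embE m n r hr σ]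
  rw [Matrix.transpose_mul]
  calc U * embE m r * Matrix.diagonal (fun i : Fin r => Real.sqrt (σ (Fin.castLE hr i))) *
        (Matrix.diagonal (fun i : Fin r => Real.sqrt (σ (Fin.castLE hr i))) * ((embE n r)ᵀ * Vᵀ))
      = U * embE m r * (Matrix.diagonal (fun i : Fin r => Real.sqrt (σ (Fin.castLE hr i))) *
        Matrix.diagonal (fun i : Fin r => Real.sqrt (σ (Fin.castLE hr i)))) * ((embE n r)ᵀ * Vᵀ) := by
        simp only [Matrix.mul_assoc]
    _ = U * (embE m r * Matrix.diagonal (fun k : Fin r => σ (Fin.castLE hr k)) * (embE n r)ᵀ) * Vᵀ := by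
        rw [hd]; simp only [Matrix.mul_assoc]

lemma core_ineq (m n r : ℕ) (hr : r ≤ min m n) (σ : Fin (min m n) → ℝ)
    (hσ0 : ∀ i, 0 ≤ σ i) (hσmono : Antitone σ)
    (N : Matrix (Fin m) (Fin n) ℝ) (hN : N.rank ≤ r) :
    ∑ j : Fin (min m n), (if (j : ℕ) < r then 0 else σ j) ^ 2
      ≤ ∑ i, ∑ j, ((rectDiag m n σ - N : Matrix (Fin m) (Fin n) ℝ)) i j ^ 2 := by
  classical
  obtain ⟨P, hsym, hidem, hPN, htr⟩ := exists_proj m n N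
  set D := rectDiag m n σ with hD
  set lam : Fin m → ℝ := fun i => if h : (i : ℕ) < min m n then σ ⟨(i : ℕ), h⟩ ^ 2 else 0 with hlam
  -- properties of P's diagonal
  have hsym' : ∀ i j, P j i = P i j := fun i j => by
    have := congrFun (congrFun hsym i) j
    simpa [Matrix.transpose_apply] using this
  have hPdiag : ∀ i, P i i = ∑ j, P i j ^ 2 := by
    intro i
    conv_lhs => rw [← hidem]
    rw [Matrix.mul_apply]
    exact Finset.sum_congr rfl fun j _ => by rw [sq, hsym' j i]
  have ht0 : ∀ i, 0 ≤ P i i := fun i => by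
    rw [hPdiag]; exact Finset.sum_nonneg fun _ _ => sq_nonneg _
  have ht1 : ∀ i, P i i ≤ 1 := by
    intro i
    have h1 : P i i ^ 2 ≤ P i i := by
      conv_rhs => rw [hPdiag i]
      exact Finset.single_le_sum (fun j _ => sq_nonneg (P i j)) (Finset.mem_univ i)
    nlinarith [ht0 i]
  have hts : ∑ i, P i i ≤ (r : ℝ) := by
    have : ∑ i, P i i = P.trace := rfl
    rw [this, htr]
    exact_mod_cast hN
  have hlmono : Antitone lam := by
    intro a b hab
    simp only [hlam]
    by_cases hb : (b : ℕ) < min m n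
    · have ha : (a : ℕ) < min m n := lt_of_le_of_lt hab hb
      rw [dif_pos ha, dif_pos hb]
      have : σ ⟨(b : ℕ), hb⟩ ≤ σ ⟨(a : ℕ), ha⟩ := hσmono hab
      exact pow_le_pow_left₀ (hσ0 _) this 2
    · rw [dif_neg hb]
      by_cases ha : (a : ℕ) < min m n
      · rw [dif_pos ha]; exact sq_nonneg _
      · rw [dif_neg ha]
  have hl0 : ∀ i, 0 ≤ lam i := by
    intro i; simp only [hlam]
    by_cases h : (i : ℕ) < min m n
    · rw [dif_pos h]; exact sq_nonneg _
    · rw [dif_neg h]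
  -- main chain
  have h1 : ((1 - P) * (D - N) : Matrix (Fin m) (Fin n) ℝ) = (1 - P) * D := by
    rw [Matrix.mul_sub, show ((1 - P) * N : Matrix (Fin m) (Fin n) ℝ) = 0 from by
      rw [Matrix.sub_mul, Matrix.one_mul, hPN, sub_self], sub_zero]
  have h2 := sqsum_proj_split P hsym hidem (D - N)
  rw [h1] at h2
  have hsymQ : (1 - P)ᵀ = 1 - P := by
    rw [Matrix.transpose_sub, Matrix.transpose_one, hsym]
  have hidemQ : (1 - P) * (1 - P) = 1 - P := by
    rw [Matrix.sub_mul, Matrix.mul_sub, Matrix.mul_sub, hidem, Matrix.one_mul, Matrix.mul_one,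
      Matrix.one_mul]
    abel
  have h3 : ∑ i, ∑ j, (((1 - P) * D : Matrix (Fin m) (Fin n) ℝ)) i j ^ 2
      = (Dᵀ * D).trace - (P * (D * Dᵀ)).trace := by
    rw [sqsum_proj_mul (1 - P) hsymQ hidemQ D, Matrix.sub_mul, Matrix.one_mul,
      Matrix.mul_sub, Matrix.trace_sub]
    congr 1
    rw [Matrix.trace_mul_comm, Matrix.mul_assoc]
  have h4 : (Dᵀ * D).trace = ∑ j : Fin (min m n), σ j ^ 2 := by
    rw [← sqsum_eq_trace, hD, sqsum_rectDiag]
  have h5 : (P * (D * Dᵀ)).trace = ∑ i, lam i * P i i := by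
    rw [hD, rectDiag_mul_transpose, trace_mul_diagonal]
  have h6 : ∑ i, lam i * P i i
      ≤ ∑ i ∈ Finset.univ.filter (fun i : Fin m => (i : ℕ) < r), lam i :=
    abel_bound r lam (fun i => P i i) hlmono hl0 ht0 ht1 hts
  have h7 : ∑ i ∈ Finset.univ.filter (fun i : Fin m => (i : ℕ) < r), lam i
      = ∑ k : Fin r, σ (Fin.castLE hr k) ^ 2 := by
    rw [sum_filter_lt r (le_trans hr (min_le_left m n))]
    refine Finset.sum_congr rfl fun k _ => ?_
    simp only [hlam, Fin.coe_castLE]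
    rw [dif_pos (lt_of_lt_of_le k.isLt hr)]
    congr 1
  have h8 : ∑ j : Fin (min m n), (if (j : ℕ) < r then 0 else σ j) ^ 2
      = ∑ j : Fin (min m n), σ j ^ 2 - ∑ k : Fin r, σ (Fin.castLE hr k) ^ 2 := by
    have e1 : ∀ j : Fin (min m n), (if (j : ℕ) < r then 0 else σ j) ^ 2
        = σ j ^ 2 - (if (j : ℕ) < r then σ j ^ 2 else 0) := by
      intro j; by_cases h : (j : ℕ) < r <;> simp [h]
    rw [Finset.sum_congr rfl fun j _ => e1 j, Finset.sum_sub_distrib]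
    congr 1
    rw [← Finset.sum_filter, sum_filter_lt r hr]
  linarith

/-- Eckart–Young–Mirsky in the Frobenius norm: the rank-`r` SVD
approximation `BA` has rank at most `r` and is a best rank-`r` approximation of `M`. -/
theorem svdApprox_eckart_young_frobenius
    (m n r : ℕ) (hr : r ≤ min m n)
    (M : Matrix (Fin m) (Fin n) ℝ)
    (U : Matrix (Fin m) (Fin m) ℝ) (V : Matrix (Fin n) (Fin n) ℝ)
    (σ : Fin (min m n) → ℝ)
    (hU : Uᵀ * U = 1) (hV : Vᵀ * V = 1)
    (hσ0 : ∀ i, 0 ≤ σ i) (hσmono : Antitone σ)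
    (hM : M = U * rectDiag m n σ * Vᵀ) :
    (svdB m n r hr U σ * svdA m n r hr V σ).rank ≤ r ∧
    ∀ N : Matrix (Fin m) (Fin n) ℝ, N.rank ≤ r →
      frob (M - svdB m n r hr U σ * svdA m n r hr V σ) ≤ frob (M - N) := by
  constructor
  · exact le_trans (Matrix.rank_mul_le_left _ _)
      (le_trans (Matrix.rank_le_card_width _) (by simp))
  intro N hN
  have hUU : U * Uᵀ = 1 := mul_eq_one_comm.mp hU
  have hVV : V * Vᵀ = 1 := mul_eq_one_comm.mp hV
  have hBA := BA_eq m n r hr U V σ hσ0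
  have hdiff : rectDiag m n σ - rectDiag m n (fun j => if (j : ℕ) < r then σ j else 0)
      = rectDiag m n (fun j => if (j : ℕ) < r then 0 else σ j) := by
    ext i j
    simp only [Matrix.sub_apply, rectDiag]
    by_cases hc : (i : ℕ) = (j : ℕ) ∧ (i : ℕ) < min m n
    · rw [dif_pos hc, dif_pos hc, dif_pos hc]
      by_cases hir : (i : ℕ) < r <;> simp [hir]
    · rw [dif_neg hc, dif_neg hc, dif_neg hc, sub_zero]
  have hMBA : M - svdB m n r hr U σ * svdA m n r hr V σ
      = U * rectDiag m n (fun j => if (j : ℕ) < r then 0 else σ j) * Vᵀ := by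
    rw [hM, hBA, ← Matrix.sub_mul, ← Matrix.mul_sub, hdiff]
  set N' : Matrix (Fin m) (Fin n) ℝ := Uᵀ * N * V with hN'
  have hrankN' : N'.rank ≤ r :=
    le_trans (le_trans (Matrix.rank_mul_le_left _ _) (Matrix.rank_mul_le_right _ _)) hN
  have hMN : M - N = U * (rectDiag m n σ - N') * Vᵀ := by
    rw [hM, hN', Matrix.mul_sub, Matrix.sub_mul]
    congr 1
    symm
    calc U * (Uᵀ * N * V) * Vᵀ = (U * Uᵀ) * N * (V * Vᵀ) := by
          simp only [Matrix.mul_assoc]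
      _ = N := by rw [hUU, hVV, Matrix.one_mul, Matrix.mul_one]
  rw [frob, frob, hMBA, hMN, sqsum_orth U V hU hV, sqsum_orth U V hU hV, sqsum_rectDiag]
  exact Real.sqrt_le_sqrt (core_ineq m n r hr σ hσ0 hσmono N' hrankN')
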